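/- (Weakly Extended Singleton Bound) For any strongly regular ω-dimensional linear network error correction code on a single-source acyclic network G=(V,E) and any non-source node t∈V, the minimum distance at t satisfies d_min^{(t)}(G) ≤ δ_t+1 if C_t ≥ ω, and d_min^{(t)}(G) ≤ 1 if C_t < ω. -/

import Mathlib

open scoped BigOperators

/-- A single-source finite acyclic directed multigraph with unit-capacity channels.
Acyclicity is witnessed by a rank function compatible with channel adjacency, and the
source node `s` has no incoming channels. -/
structure Network (V : Type*) (E : Type*) where
  tail : E → V
  head : E → V
  s : V
  no_in_source : ∀ e, head e ≠ s
  rk : E → ℕ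
  acyclic : ∀ d e, head d = tail e → rk d < rk e

namespace Network

variable {V : Type*} {E : Type*}

/-- `p` is a nonempty directed path (a list of channels matching head-to-tail). -/
def IsPath (N : Network V E) (p : List E) : Prop :=
  p ≠ [] ∧ p.Chain' fun d e => N.head d = N.tail e

/-- `p` is a nonempty directed path starting at node `u`. -/
def PathFrom (N : Network V E) (p : List E) (u : V) : Prop :=
  N.IsPath p ∧ ∀ e ∈ p.head?, N.tail e = u

variable [Fintype V] [Fintype E] [DecidableEq V] [DecidableEq E]

/-- `C` is a cut between the source and the collection `T` of nodes: after removing the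
channels of `C` no directed path from the source reaches a node of `T`. -/
def IsCutNodes (N : Network V E) (C : Finset E) (T : Finset V) : Prop :=
  ∀ p : List E, N.PathFrom p N.s → (∃ e ∈ p.getLast?, N.head e ∈ T) → ∃ e ∈ p, e ∈ C

/-- The minimum cut capacity between the source and a collection `T` of nodes. -/
noncomputable def minCutNodes (N : Network V E) (T : Finset V) : ℕ :=
  sInf {n | ∃ C : Finset E, N.IsCutNodes C T ∧ C.card = n}

/-- The minimum cut capacity `C_t` between the source and a node `t`. -/
noncomputable def minCutNode (N : Network V E) (t : V) : ℕ :=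
  N.minCutNodes {t}

/-- `C` is a cut between the source and a collection `ξ` of channels (equivalently, a
cut between the source and the new nodes `n_e`, `e ∈ ξ`, in the network obtained by
subdividing every channel of `ξ`): every path from the source whose last channel lies
in `ξ` must meet `C`. -/
def IsCutChans (N : Network V E) (C : Finset E) (ξ : Finset E) : Prop :=
  ∀ p : List E, N.PathFrom p N.s → (∃ e ∈ p.getLast?, e ∈ ξ) → ∃ e ∈ p, e ∈ C

/-- The minimum cut capacity `C_ξ` between the source and a collection `ξ` of channels. -/
noncomputable def minCutChans (N : Network V E) (ξ : Finset E) : ℕ :=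
  sInf {n | ∃ C : Finset E, N.IsCutChans C ξ ∧ C.card = n}

end Network

section Codes

variable {V E : Type*} [Fintype V] [Fintype E] [DecidableEq V] [DecidableEq E]
variable (F : Type*) [Field F]

/-- `f` is the family of global encoding kernels of the `ω`-dimensional linear network
code with local encoding coefficients `k` (between adjacent real channels) and `ks`
(from the `ω` imaginary message channels at the source): the kernels of the imaginary
message channels form the standard basis of `F^ω` and
`f_e = ∑_{d ∈ In(tail e)} k_{d,e} • f_d`. -/
def IsGlobalKernel (N : Network V E) (ω : ℕ) (k : E → E → F) (ks : Fin ω → E → F)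
    (f : E → Fin ω → F) : Prop :=
  ∀ e, f e = (∑ d : E, if N.head d = N.tail e then k d e • f d else 0)
    + ∑ i : Fin ω, (if N.tail e = N.s then ks i e else 0) • (Pi.single i 1 : Fin ω → F)

/-- `f` is the family of extended global encoding kernels (coordinates indexed by
`Fin ω ⊕ E`, i.e. by `In(s) ∪ E`) of the `ω`-dimensional linear network
error-correction code with local encoding coefficients `k`, `ks`:
`f̃_e = ∑_{d ∈ In(tail e)} k_{d,e} • f̃_d + 1_e`. -/
def IsExtKernel (N : Network V E) (ω : ℕ) (k : E → E → F) (ks : Fin ω → E → F)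
    (f : E → (Fin ω ⊕ E) → F) : Prop :=
  ∀ e, f e = (∑ d : E, if N.head d = N.tail e then k d e • f d else 0)
    + (∑ i : Fin ω, (if N.tail e = N.s then ks i e else 0) • (Pi.single (Sum.inl i) 1 : (Fin ω ⊕ E) → F))
    + (Pi.single (Sum.inr e) 1 : (Fin ω ⊕ E) → F)

variable {ω : ℕ}

/-- The row of the decoding matrix `F̃_T` of a collection `T` of nodes indexed by
`d ∈ In(s) ∪ E` (extended by zero outside the coordinates `In(T)`). -/
def rowT (N : Network V E) (f : E → (Fin ω ⊕ E) → F) (T : Finset V)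
    (d : Fin ω ⊕ E) : E → F :=
  fun e => if N.head e ∈ T then f e d else 0

/-- The message space `Φ(T)` of a collection `T` of nodes. -/
def PhiT (N : Network V E) (f : E → (Fin ω ⊕ E) → F) (T : Finset V) :
    Submodule F (E → F) :=
  Submodule.span F (Set.range fun i : Fin ω => rowT F N f T (Sum.inl i))

/-- The error space `Δ(T, ρ)` of an error pattern `ρ` with respect to `T`. -/
def DeltaT (N : Network V E) (f : E → (Fin ω ⊕ E) → F) (T : Finset V)
    (ρ : Finset E) : Submodule F (E → F) :=
  Submodule.span F ((fun e => rowT F N f T (Sum.inr e)) '' (ρ : Set E))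

/-- The minimum distance `d_min^{(T)}` at a collection `T` of nodes. -/
noncomputable def dminT (N : Network V E) (f : E → (Fin ω ⊕ E) → F) (T : Finset V) : ℕ :=
  sInf {n | ∃ ρ : Finset E, ρ.card = n ∧ DeltaT F N f T ρ ⊓ PhiT F N f T ≠ ⊥}

/-- `ρ₁ ≺_T ρ₂` : `Δ(T,ρ₁) ⊆ Δ(T,ρ₂)` for every `ω`-dimensional `F`-valued LNEC code
on the network. -/
def DominatesT (N : Network V E) (ω : ℕ) (T : Finset V) (ρ₁ ρ₂ : Finset E) : Prop :=
  ∀ (k : E → E → F) (ks : Fin ω → E → F) (f : E → (Fin ω ⊕ E) → F),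
    IsExtKernel F N ω k ks f → DeltaT F N f T ρ₁ ≤ DeltaT F N f T ρ₂

/-- `rank_T(ρ)`, the rank of an error pattern with respect to `T`. -/
noncomputable def rankT (N : Network V E) (ω : ℕ) (T : Finset V) (ρ : Finset E) : ℕ :=
  sInf {n | ∃ ρ' : Finset E, DominatesT F N ω T ρ ρ' ∧ ρ'.card = n}

/-- The row of the decoding matrix `F̃_ξ` of a collection `ξ` of channels indexed by
`d ∈ In(s) ∪ E` (extended by zero outside the coordinates `ξ`). -/
def rowX (N : Network V E) (f : E → (Fin ω ⊕ E) → F) (ξ : Finset E)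
    (d : Fin ω ⊕ E) : E → F :=
  fun e => if e ∈ ξ then f e d else 0

/-- The message space `Φ(ξ)` of a collection `ξ` of channels. -/
def PhiX (N : Network V E) (f : E → (Fin ω ⊕ E) → F) (ξ : Finset E) :
    Submodule F (E → F) :=
  Submodule.span F (Set.range fun i : Fin ω => rowX F N f ξ (Sum.inl i))

/-- The error space `Δ(ξ, ρ)` of an error pattern `ρ` with respect to `ξ`. -/
def DeltaX (N : Network V E) (f : E → (Fin ω ⊕ E) → F) (ξ : Finset E)
    (ρ : Finset E) : Submodule F (E → F) :=
  Submodule.span F ((fun e => rowX F N f ξ (Sum.inr e)) '' (ρ : Set E))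

/-- The minimum distance `d_min^{(ξ)}` at a collection `ξ` of channels. -/
noncomputable def dminX (N : Network V E) (f : E → (Fin ω ⊕ E) → F) (ξ : Finset E) : ℕ :=
  sInf {n | ∃ ρ : Finset E, ρ.card = n ∧ DeltaX F N f ξ ρ ⊓ PhiX F N f ξ ≠ ⊥}

/-- `ρ₁ ≺_ξ ρ₂` : `Δ(ξ,ρ₁) ⊆ Δ(ξ,ρ₂)` for every `ω`-dimensional `F`-valued LNEC code
on the network. -/
def DominatesX (N : Network V E) (ω : ℕ) (ξ : Finset E) (ρ₁ ρ₂ : Finset E) : Prop :=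
  ∀ (k : E → E → F) (ks : Fin ω → E → F) (f : E → (Fin ω ⊕ E) → F),
    IsExtKernel F N ω k ks f → DeltaX F N f ξ ρ₁ ≤ DeltaX F N f ξ ρ₂

/-- `rank_ξ(ρ)`, the rank of an error pattern with respect to `ξ`. -/
noncomputable def rankX (N : Network V E) (ω : ℕ) (ξ : Finset E) (ρ : Finset E) : ℕ :=
  sInf {n | ∃ ρ' : Finset E, DominatesX F N ω ξ ρ ρ' ∧ ρ'.card = n}

/-- Regular LNEC code: `dim Φ(t) = ω` for every non-source node with `C_t ≥ ω`. -/
def Regular (N : Network V E) (f : E → (Fin ω ⊕ E) → F) : Prop :=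
  ∀ t : V, t ≠ N.s → ω ≤ N.minCutNode t →
    Module.finrank F (PhiT F N f ({t} : Finset V)) = ω

/-- Strongly regular LNEC code: `dim Φ(t) = min{ω, C_t}` for every non-source node. -/
def StronglyRegular (N : Network V E) (f : E → (Fin ω ⊕ E) → F) : Prop :=
  ∀ t : V, t ≠ N.s →
    Module.finrank F (PhiT F N f ({t} : Finset V)) = min ω (N.minCutNode t)

/-- Strongly sup-regular LNEC code: `dim Φ(T) = min{ω, C_T}` for every nonempty
collection of non-source nodes. -/
def StronglySupRegular (N : Network V E) (f : E → (Fin ω ⊕ E) → F) : Prop :=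
  ∀ T : Finset V, T.Nonempty → N.s ∉ T →
    Module.finrank F (PhiT F N f T) = min ω (N.minCutNodes T)

/-- Channel-regular LNEC code: `dim Φ(ξ) = min{ω, C_ξ}` for every nonempty collection
of channels. -/
def ChannelRegular (N : Network V E) (f : E → (Fin ω ⊕ E) → F) : Prop :=
  ∀ ξ : Finset E, ξ.Nonempty →
    Module.finrank F (PhiX F N f ξ) = min ω (N.minCutChans ξ)

/-- LNEC multicast MDS code. -/
def IsMulticastMDS (N : Network V E) (f : E → (Fin ω ⊕ E) → F) : Prop :=
  Regular F N f ∧ ∀ t : V, t ≠ N.s → ω ≤ N.minCutNode t →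
    dminT F N f {t} = N.minCutNode t - ω + 1

/-- LNEC broadcast MDS code. -/
def IsBroadcastMDS (N : Network V E) (f : E → (Fin ω ⊕ E) → F) : Prop :=
  StronglyRegular F N f ∧ ∀ t : V, t ≠ N.s →
    (ω ≤ N.minCutNode t → dminT F N f {t} = N.minCutNode t - ω + 1) ∧
    (N.minCutNode t < ω → dminT F N f {t} = 1)

/-- LNEC dispersion MDS code. -/
def IsDispersionMDS (N : Network V E) (f : E → (Fin ω ⊕ E) → F) : Prop :=
  StronglySupRegular F N f ∧ ∀ T : Finset V, T.Nonempty → N.s ∉ T →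
    (ω ≤ N.minCutNodes T → dminT F N f T = N.minCutNodes T - ω + 1) ∧
    (N.minCutNodes T < ω → dminT F N f T = 1)

/-- LNEC generic MDS code. -/
def IsGenericMDS (N : Network V E) (f : E → (Fin ω ⊕ E) → F) : Prop :=
  ChannelRegular F N f ∧ ∀ ξ : Finset E, ξ.Nonempty →
    (ω ≤ N.minCutChans ξ → dminX F N f ξ = N.minCutChans ξ - ω + 1) ∧
    (N.minCutChans ξ < ω → dminX F N f ξ = 1)

/-- `R_t(δ_t)`: the set of error patterns `ρ` with `|ρ| = rank_t(ρ) = δ_t`. -/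
def Rset (N : Network V E) (ω : ℕ) (t : V) : Set (Finset E) :=
  {ρ | ρ.card = N.minCutNode t - ω ∧ rankT F N ω ({t} : Finset V) ρ = N.minCutNode t - ω}

end Codes

/-!
Let `C` be a minimum cut between the source and `t`. By induction along the channel ranks, the
extended kernel of every channel cut off by `C` lies in the span of the kernels `f̃_c`, `c ∈ C`,
and of the indicators `1_d`, `d ∉ C`. The matrix `(f̃_c(c'))_{c, c' ∈ C}` is unitriangular with
respect to the ranks, hence invertible, and so every message row of `F̃_t` is a combination of
the error rows indexed by `C`: `Φ(t) ⊆ Δ(t, C)`.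

If `m = dim Φ(t) ≥ 1`, remove `m - 1` channels `R` from `C`. Since `dim Δ(t, R) < m` and
`Φ(t) ⊆ Δ(t, C \ R) + Δ(t, R)`, the space `Δ(t, C \ R)` meets `Φ(t)` nontrivially, so
`d_min^{(t)} ≤ C_t - m + 1`. Strong regularity gives `m = min ω C_t`.
-/

namespace Network

variable {V E : Type*} {N : Network V E} {C : Finset E}

theorem exists_isCutNodes_card_eq_minCutNodes [Fintype E] (N : Network V E) (T : Finset V) :
    ∃ C : Finset E, N.IsCutNodes C T ∧ C.card = N.minCutNodes T := by
  have huniv : N.IsCutNodes Finset.univ T := fun p hp _ =>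
    (List.exists_mem_of_ne_nil p hp.1.1).imp fun e he => ⟨he, Finset.mem_univ e⟩
  exact Nat.sInf_mem (s := {n | ∃ C : Finset E, N.IsCutNodes C T ∧ C.card = n})
    ⟨_, Finset.univ, huniv, rfl⟩

theorem IsCutNodes.isCutChans_singleton {T : Finset V} (hC : N.IsCutNodes C T) {e : E}
    (he : N.head e ∈ T) : N.IsCutChans C {e} := by
  rintro p hp ⟨e', he', he'e⟩
  rw [Finset.mem_singleton] at he'e
  exact hC p hp ⟨e', he', he'e ▸ he⟩

theorem IsCutChans.tail_ne_s {e : E} (hC : N.IsCutChans C {e}) (he : e ∉ C) :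
    N.tail e ≠ N.s := by
  intro hs
  obtain ⟨c, hc, hcC⟩ := hC [e] ⟨⟨List.cons_ne_nil e [], List.isChain_singleton e⟩, by simpa⟩
    (by simp)
  rw [List.mem_singleton] at hc
  exact he (hc ▸ hcC)

theorem IsCutChans.of_head_eq_tail {d e : E} (hC : N.IsCutChans C {e}) (he : e ∉ C)
    (hde : N.head d = N.tail e) : N.IsCutChans C {d} := by
  rintro p ⟨⟨hne, hchain⟩, hstart⟩ ⟨d', hd', hd'd⟩
  rw [Finset.mem_singleton] at hd'd
  subst hd'd
  have hpath : N.PathFrom (p ++ [e]) N.s := by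
    refine ⟨⟨by simp, ?_⟩, ?_⟩
    · rw [List.Chain', List.isChain_append]
      refine ⟨hchain, List.isChain_singleton e, fun x hx y hy => ?_⟩
      rw [hd'] at hx
      simp only [Option.mem_some_iff, List.head?_cons] at hx hy
      exact hx ▸ hy ▸ hde
    · rwa [List.head?_append_of_ne_nil p hne]
  obtain ⟨c, hc, hcC⟩ := hC (p ++ [e]) hpath (by simp)
  rcases List.mem_append.mp hc with hc | hc
  · exact ⟨c, hc, hcC⟩
  · exact absurd (List.mem_singleton.mp hc ▸ hcC) he

end Network

theorem Submodule.inf_ne_bot_of_le_sup_of_finrank_lt {K W : Type*} [DivisionRing K]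
    [AddCommGroup W] [Module K W] [FiniteDimensional K W] {P A B : Submodule K W}
    (hP : P ≤ A ⊔ B) (hB : Module.finrank K B < Module.finrank K P) : A ⊓ P ≠ ⊥ := by
  intro hAP
  have hsup := Submodule.finrank_sup_add_finrank_inf_eq A P
  have hmono := Submodule.finrank_mono (sup_le (le_sup_left : A ≤ A ⊔ B) hP)
  have hsub := Submodule.finrank_add_le_finrank_add_finrank A B
  rw [hAP, finrank_bot] at hsup
  omega

section ErrorSpaces

variable {V E : Type*} [DecidableEq V] {F : Type*} [Field F] {N : Network V E} {ω : ℕ}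
  {f : E → (Fin ω ⊕ E) → F} {T : Finset V}

theorem deltaT_union [DecidableEq E] (ρ₁ ρ₂ : Finset E) :
    DeltaT F N f T (ρ₁ ∪ ρ₂) = DeltaT F N f T ρ₁ ⊔ DeltaT F N f T ρ₂ := by
  rw [DeltaT, DeltaT, DeltaT, Finset.coe_union, Set.image_union, Submodule.span_union]

theorem finrank_deltaT_le_card (ρ : Finset E) :
    Module.finrank F (DeltaT F N f T ρ) ≤ ρ.card := by
  classical
  rw [DeltaT, ← Finset.coe_image]
  exact (finrank_span_finset_le_card _).trans Finset.card_image_le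

theorem dminT_le_card {ρ : Finset E} (hρ : DeltaT F N f T ρ ⊓ PhiT F N f T ≠ ⊥) :
    dminT F N f T ≤ ρ.card :=
  Nat.sInf_le ⟨ρ, rfl, hρ⟩

/-- Junk value: when `Φ(T) = 0` no error pattern qualifies, and `sInf ∅ = 0`. -/
theorem dminT_eq_zero_of_phiT_eq_bot (hΦ : PhiT F N f T = ⊥) : dminT F N f T = 0 := by
  rw [dminT, hΦ]
  convert Nat.sInf_empty
  simp

end ErrorSpaces

namespace IsExtKernel

variable {V E : Type*} [Fintype E] [DecidableEq V] [DecidableEq E] {F : Type*} [Field F]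
  {N : Network V E} {ω : ℕ} {k : E → E → F} {ks : Fin ω → E → F} {f : E → (Fin ω ⊕ E) → F}

theorem apply_inr (hf : IsExtKernel F N ω k ks f) (e c : E) :
    f e (Sum.inr c) =
      (∑ d : E, if N.head d = N.tail e then k d e * f d (Sum.inr c) else 0) +
        if c = e then 1 else 0 := by
  simpa [Finset.sum_apply, ite_apply, Pi.single_apply] using congrFun (hf e) (Sum.inr c)

theorem apply_inr_of_not_lt (hf : IsExtKernel F N ω k ks f) {e c : E}
    (hce : ¬ N.rk c < N.rk e) : f e (Sum.inr c) = if c = e then 1 else 0 := by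
  rw [hf.apply_inr, Finset.sum_eq_zero, zero_add]
  intro d _
  split_ifs with hde
  · have hd := N.acyclic d e hde
    rw [hf.apply_inr_of_not_lt (by omega), if_neg (by rintro rfl; omega), mul_zero]
  · rfl
termination_by N.rk e
decreasing_by exact hd

theorem mulVec_surjective (hf : IsExtKernel F N ω k ks f) (C : Finset E) :
    Function.Surjective ((Matrix.of fun c c' : C => f c (Sum.inr c')).mulVec) := by
  rw [Matrix.mulVec_surjective_iff_isUnit, ← Matrix.mulVec_injective_iff_isUnit,
    ← Matrix.coe_mulVecLin, injective_iff_map_eq_zero]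
  classical
  intro y hy
  by_contra hy0
  obtain ⟨c₀, hc₀, hmin⟩ := Finset.exists_min_image (Finset.univ.filter (y · ≠ 0))
    (fun c : C => N.rk c)
    (Finset.filter_nonempty_iff.mpr ((Function.ne_iff.mp hy0).imp fun c hc => ⟨by simp, hc⟩))
  have hyc₀ : y c₀ ≠ 0 := (Finset.mem_filter.mp hc₀).2
  -- the minimality of `rk c₀` on the support of `y` singles out the diagonal entry
  have hrow : (Matrix.mulVecLin (Matrix.of fun c c' : C => f c (Sum.inr c')) y) c₀ = y c₀ := by
    rw [Matrix.mulVecLin_apply, Matrix.mulVec, dotProduct, Finset.sum_eq_single c₀]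
    · rw [Matrix.of_apply, hf.apply_inr_of_not_lt (lt_irrefl _), if_pos rfl, one_mul]
    · intro c _ hc
      by_cases hyc : y c = 0
      · rw [hyc, mul_zero]
      · have := hmin c (Finset.mem_filter.mpr ⟨Finset.mem_univ c, hyc⟩)
        rw [Matrix.of_apply, hf.apply_inr_of_not_lt (by omega),
          if_neg (fun h => hc (Subtype.ext h)), zero_mul]
    · exact fun h => absurd (Finset.mem_univ c₀) h
  exact hyc₀ (hrow.symm.trans (congrFun hy c₀))

theorem mem_span_of_isCutChans (hf : IsExtKernel F N ω k ks f) {C : Finset E} {e : E}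
    (hC : N.IsCutChans C {e}) :
    f e ∈ Submodule.span F (f '' C ∪ (fun d => Pi.single (Sum.inr d) 1) '' (C : Set E)ᶜ) := by
  by_cases he : e ∈ C
  · exact Submodule.subset_span (Or.inl ⟨e, he, rfl⟩)
  rw [hf e]
  simp only [hC.tail_ne_s he, if_false, zero_smul, Finset.sum_const_zero, add_zero]
  refine add_mem (Submodule.sum_mem _ fun d _ => ?_) (Submodule.subset_span (Or.inr ⟨e, he, rfl⟩))
  split_ifs with hde
  · exact Submodule.smul_mem _ _ (hf.mem_span_of_isCutChans (hC.of_head_eq_tail he hde))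
  · exact zero_mem _
termination_by N.rk e
decreasing_by exact N.acyclic d e hde

theorem phiT_le_deltaT (hf : IsExtKernel F N ω k ks f) {T : Finset V} {C : Finset E}
    (hC : N.IsCutNodes C T) : PhiT F N f T ≤ DeltaT F N f T C := by
  rw [PhiT, Submodule.span_le]
  rintro _ ⟨i, rfl⟩
  obtain ⟨y, hy⟩ := hf.mulVec_surjective C (fun c => f c (Sum.inl i))
  let φ : ((Fin ω ⊕ E) → F) →ₗ[F] F :=
    LinearMap.proj (Sum.inl i) - ∑ c : C, y c • LinearMap.proj (Sum.inr c.1)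
  have hφ_apply : ∀ v, φ v = v (Sum.inl i) - ∑ c : C, y c * v (Sum.inr c) := fun v => by
    simp [φ]
  have hφ : ∀ e, N.IsCutChans C {e} → φ (f e) = 0 := by
    intro e he
    refine (Submodule.span_le (p := LinearMap.ker φ)).2 ?_ (hf.mem_span_of_isCutChans he)
    rintro _ (⟨c, hc, rfl⟩ | ⟨d, hd, rfl⟩) <;> rw [SetLike.mem_coe, LinearMap.mem_ker, hφ_apply]
    · have hyc := congrFun hy ⟨c, hc⟩
      simp only [Matrix.mulVec, dotProduct, Matrix.of_apply] at hyc
      rw [← hyc, sub_eq_zero]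
      exact Finset.sum_congr rfl fun _ _ => mul_comm _ _
    · beta_reduce
      rw [Pi.single_eq_of_ne Sum.inl_ne_inr, zero_sub, neg_eq_zero]
      refine Finset.sum_eq_zero fun c _ => ?_
      rw [Pi.single_eq_of_ne (Sum.inr_injective.ne (ne_of_mem_of_not_mem c.2 hd)), mul_zero]
  have hrow : rowT F N f T (Sum.inl i) = ∑ c : C, y c • rowT F N f T (Sum.inr c) := by
    funext e
    simp only [rowT, Finset.sum_apply, Pi.smul_apply, smul_eq_mul]
    split_ifs with he
    · exact sub_eq_zero.mp ((hφ_apply _).symm.trans (hφ e (hC.isCutChans_singleton he)))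
    · simp
  change rowT F N f T (Sum.inl i) ∈ DeltaT F N f T C
  rw [hrow]
  exact Submodule.sum_mem _ fun c _ => Submodule.smul_mem _ _ (Submodule.subset_span ⟨c, c.2, rfl⟩)

theorem dminT_le (hf : IsExtKernel F N ω k ks f) {T : Finset V} {C : Finset E}
    (hC : N.IsCutNodes C T) :
    dminT F N f T ≤ C.card - Module.finrank F (PhiT F N f T) + 1 := by
  set m := Module.finrank F (PhiT F N f T)
  rcases Nat.eq_zero_or_pos m with hm | hm
  · rw [dminT_eq_zero_of_phiT_eq_bot (Submodule.finrank_eq_zero.mp hm)]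
    exact Nat.zero_le _
  have hΦ := hf.phiT_le_deltaT hC
  have hmC : m ≤ C.card := (Submodule.finrank_mono hΦ).trans (finrank_deltaT_le_card C)
  obtain ⟨R, hRC, hR⟩ := Finset.exists_subset_card_eq (show m - 1 ≤ C.card by omega)
  have hdisturb : DeltaT F N f T (C \ R) ⊓ PhiT F N f T ≠ ⊥ := by
    refine Submodule.inf_ne_bot_of_le_sup_of_finrank_lt (B := DeltaT F N f T R) ?_ ?_
    · rwa [← deltaT_union, Finset.sdiff_union_of_subset hRC]
    · have := finrank_deltaT_le_card (N := N) (f := f) (T := T) R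
      omega
  calc dminT F N f T ≤ (C \ R).card := dminT_le_card hdisturb
    _ = C.card - m + 1 := by rw [Finset.card_sdiff_of_subset hRC]; omega

end IsExtKernel

theorem statement3_general {V E : Type*} [Fintype E] [DecidableEq V] [DecidableEq E]
    (F : Type*) [Field F] (N : Network V E) (ω : ℕ)
    (k : E → E → F) (ks : Fin ω → E → F) (f : E → (Fin ω ⊕ E) → F)
    (hf : IsExtKernel F N ω k ks f) (hreg : StronglyRegular F N f)
    (t : V) (ht : t ≠ N.s) :
    (ω ≤ N.minCutNode t → dminT F N f {t} ≤ N.minCutNode t - ω + 1) ∧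
    (N.minCutNode t < ω → dminT F N f {t} ≤ 1) := by
  obtain ⟨C, hC, hcard⟩ := N.exists_isCutNodes_card_eq_minCutNodes {t}
  have hbound : dminT F N f {t} ≤ N.minCutNode t - min ω (N.minCutNode t) + 1 := by
    rw [← hreg t ht, Network.minCutNode, ← hcard]
    exact hf.dminT_le hC
  refine ⟨fun hωC => ?_, fun hCω => ?_⟩
  · rwa [min_eq_left hωC] at hbound
  · rwa [min_eq_right hCω.le, Nat.sub_self] at hbound

/-- **Weakly Extended Singleton Bound.** For any strongly regular
`ω`-dimensional LNEC code and any non-source node `t`, `d_min^{(t)} ≤ δ_t + 1` if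
`C_t ≥ ω`, and `d_min^{(t)} ≤ 1` if `C_t < ω`. -/
theorem statement3 {V E : Type*} [Fintype V] [Fintype E] [DecidableEq V] [DecidableEq E]
    (F : Type*) [Field F] [Fintype F] (N : Network V E) (ω : ℕ) (hω : 1 ≤ ω)
    (k : E → E → F) (ks : Fin ω → E → F) (f : E → (Fin ω ⊕ E) → F)
    (hf : IsExtKernel F N ω k ks f) (hreg : StronglyRegular F N f)
    (t : V) (ht : t ≠ N.s) :
    (ω ≤ N.minCutNode t → dminT F N f {t} ≤ N.minCutNode t - ω + 1) ∧
    (N.minCutNode t < ω → dminT F N f {t} ≤ 1) :=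
  statement3_general F N ω k ks f hf hreg t ht
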